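/- Let F be a finite subgroup of T² = (ℝ/ℤ)² with F ∩ ({0} × ℝ/ℤ) = {0}. Then there exists a closed connected one-dimensional subgroup H of T² (the image of a line through the origin with primitive integer direction vector) such that F ⊆ H and H ∩ ({0} × ℝ/ℤ) = {0}. -/
import Mathlib


/-- The homomorphism `ℝ →+ T²` whose image is the closed connected one-dimensional
subgroup in direction `(l, m) ∈ ℤ²`. -/
noncomputable def lineHom (l m : ℤ) : ℝ →+ AddCircle (1 : ℝ) × AddCircle (1 : ℝ) :=
  AddMonoidHom.prod
    ((QuotientAddGroup.mk' (AddSubgroup.zmultiples (1 : ℝ))).comp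
      (AddMonoidHom.mulLeft (l : ℝ)))
    ((QuotientAddGroup.mk' (AddSubgroup.zmultiples (1 : ℝ))).comp
      (AddMonoidHom.mulLeft (m : ℝ)))

lemma lineHom_apply (l m : ℤ) (x : ℝ) :
    lineHom l m x = (((l * x : ℝ) : AddCircle (1 : ℝ)), ((m * x : ℝ) : AddCircle (1 : ℝ))) :=
  rfl

/-- torsion points of the circle are rational with denominator `n`. -/
lemma torsion_rat {n : ℕ} (hn : 0 < n) {x : AddCircle (1 : ℝ)} (h : n • x = 0) :
    ∃ k : ℤ, x = ((k / n : ℝ) : AddCircle (1 : ℝ)) := by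
  induction x using QuotientAddGroup.induction_on with
  | H r =>
    rw [← AddCircle.coe_nsmul, AddCircle.coe_eq_zero_iff] at h
    obtain ⟨k, hk⟩ := h
    refine ⟨k, ?_⟩
    congr 1
    field_simp
    rw [mul_comm]
    simpa [zsmul_eq_mul, smul_eq_mul] using hk.symm

lemma range_inter (q : ℤ) :
    (lineHom 1 q).range ⊓ AddSubgroup.prod (⊥ : AddSubgroup (AddCircle (1 : ℝ)))
        (⊤ : AddSubgroup (AddCircle (1 : ℝ))) = ⊥ := by
  rw [eq_bot_iff]
  rintro z ⟨⟨x, rfl⟩, hz⟩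
  obtain ⟨hz1, -⟩ := AddSubgroup.mem_prod.mp hz
  rw [AddSubgroup.mem_bot] at hz1
  have hx : ((x : ℝ) : AddCircle (1 : ℝ)) = 0 := by
    have : (((1 : ℤ) * x : ℝ) : AddCircle (1 : ℝ)) = 0 := hz1
    simpa using this
  rw [AddCircle.coe_eq_zero_iff] at hx
  obtain ⟨k, hk⟩ := hx
  simp only [zsmul_eq_mul, mul_one] at hk
  subst hk
  rw [AddSubgroup.mem_bot, lineHom_apply, Prod.mk_eq_zero]
  constructor
  · rw [AddCircle.coe_eq_zero_iff]
    exact ⟨k, by push_cast [zsmul_eq_mul]; ring⟩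
  · rw [AddCircle.coe_eq_zero_iff]
    exact ⟨q * k, by push_cast [zsmul_eq_mul]; ring⟩

/-- A finite subgroup `F` of the 2-torus with `F ∩ ({0} × ℝ/ℤ) = {0}` is contained in
a closed connected one-dimensional subgroup `H` (the image of a line with primitive
integer direction vector) satisfying `H ∩ ({0} × ℝ/ℤ) = {0}`. -/
theorem finite_subgroup_contained_in_line
    (F : AddSubgroup (AddCircle (1 : ℝ) × AddCircle (1 : ℝ)))
    (hfin : Finite F)
    (htriv : F ⊓ AddSubgroup.prod (⊥ : AddSubgroup (AddCircle (1 : ℝ)))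
      (⊤ : AddSubgroup (AddCircle (1 : ℝ))) = ⊥) :
    ∃ l m : ℤ, Int.gcd l m = 1 ∧
      F ≤ (lineHom l m).range ∧
      (lineHom l m).range ⊓ AddSubgroup.prod (⊥ : AddSubgroup (AddCircle (1 : ℝ)))
        (⊤ : AddSubgroup (AddCircle (1 : ℝ))) = ⊥ := by
  classical
  set n : ℕ := Nat.card F with hn_def
  have hn : 0 < n := Nat.card_pos
  -- every element of F is n-torsion
  have htors : ∀ f : F, n • (f : AddCircle (1 : ℝ) × AddCircle (1 : ℝ)) = 0 := by
    intro f
    have : n • f = 0 := card_nsmul_eq_zero'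
    exact_mod_cast congrArg (Subtype.val) this
  -- first coordinate is injective on F
  have hinj : ∀ f : F, (f : AddCircle (1 : ℝ) × AddCircle (1 : ℝ)).1 = 0 → f = 0 := by
    intro f hf
    have hmem : (f : AddCircle (1 : ℝ) × AddCircle (1 : ℝ)) ∈
        F ⊓ AddSubgroup.prod (⊥ : AddSubgroup (AddCircle (1 : ℝ)))
          (⊤ : AddSubgroup (AddCircle (1 : ℝ))) := ⟨f.2, by simpa using hf, trivial⟩
    rw [htriv, AddSubgroup.mem_bot] at hmem
    exact Subtype.ext hmem
  -- the point 1/n of the circle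
  set u : AddCircle (1 : ℝ) := (((1 : ℝ) / n : ℝ) : AddCircle (1 : ℝ)) with hu_def
  have hu_ord : addOrderOf u = n := by
    have := AddCircle.addOrderOf_div_of_gcd_eq_one (p := (1 : ℝ)) (m := 1) hn
      (by simpa using Nat.gcd_one_left n)
    simpa [hu_def] using this
  set Z : AddSubgroup (AddCircle (1 : ℝ)) := AddSubgroup.zmultiples u with hZ_def
  have hZcard : Nat.card Z = n := by rw [hZ_def, Nat.card_zmultiples, hu_ord]
  -- first coordinates of elements of F lie in Z
  have hfst : ∀ f : F, (f : AddCircle (1 : ℝ) × AddCircle (1 : ℝ)).1 ∈ Z := by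
    intro f
    obtain ⟨k, hk⟩ := torsion_rat hn (by
      have := htors f
      exact congrArg Prod.fst this)
    refine ⟨k, ?_⟩
    rw [hk]
    show k • u = (((k : ℝ) / n : ℝ) : AddCircle (1 : ℝ))
    rw [hu_def, ← AddCircle.coe_zsmul]
    congr 1
    push_cast [zsmul_eq_mul]
    ring
  -- the map F → Z, injective between finite sets of the same cardinality
  let φ : F → Z := fun f => ⟨_, hfst f⟩
  have hφinj : Function.Injective φ := by
    intro f g hfg
    have h1 : (f : AddCircle (1 : ℝ) × AddCircle (1 : ℝ)).1 =
        (g : AddCircle (1 : ℝ) × AddCircle (1 : ℝ)).1 := congrArg Subtype.val hfg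
    have : ((f - g : F) : AddCircle (1 : ℝ) × AddCircle (1 : ℝ)).1 = 0 := by
      push_cast
      simp [Prod.fst_sub, h1]
    have := hinj _ this
    rwa [sub_eq_zero] at this
  have hφsurj : Function.Surjective φ := by
    have : Finite Z := Nat.finite_of_card_ne_zero (by omega)
    have := Fintype.ofFinite F
    have := Fintype.ofFinite Z
    refine ((Fintype.bijective_iff_injective_and_card φ).mpr ⟨hφinj, ?_⟩).surjective
    rw [← Nat.card_eq_fintype_card, ← Nat.card_eq_fintype_card, hZcard]
  -- get f₀ ∈ F with first coordinate u
  obtain ⟨f₀, hf₀⟩ := hφsurj ⟨u, AddSubgroup.mem_zmultiples u⟩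
  have hf₀1 : (f₀ : AddCircle (1 : ℝ) × AddCircle (1 : ℝ)).1 = u := congrArg Subtype.val hf₀
  obtain ⟨q, hq⟩ := torsion_rat hn (congrArg Prod.snd (htors f₀))
  -- f₀ is on the line with slope q
  have hf₀line : (f₀ : AddCircle (1 : ℝ) × AddCircle (1 : ℝ)) = lineHom 1 q ((1 : ℝ) / n) := by
    rw [lineHom_apply]
    refine Prod.ext ?_ ?_
    · rw [hf₀1, hu_def]; norm_num
    · rw [hq]; congr 1; push_cast; ring
  refine ⟨1, q, Int.one_gcd, ?_, range_inter q⟩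
  intro z hz
  obtain ⟨k, hk⟩ := hfst ⟨z, hz⟩
  -- z = k • f₀
  have hzk : z = k • (f₀ : AddCircle (1 : ℝ) × AddCircle (1 : ℝ)) := by
    have hmem : z - k • (f₀ : AddCircle (1 : ℝ) × AddCircle (1 : ℝ)) ∈ F :=
      F.sub_mem hz (F.zsmul_mem f₀.2 k)
    have h1 : (z - k • (f₀ : AddCircle (1 : ℝ) × AddCircle (1 : ℝ))).1 = 0 := by
      simp only [Prod.fst_sub, Prod.smul_fst, hf₀1]
      rw [← hk]
      exact sub_self _
    have := hinj ⟨_, hmem⟩ h1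
    have := congrArg Subtype.val this
    simp only [AddSubgroup.coe_zero] at this
    rwa [sub_eq_zero] at this
  rw [hzk, hf₀line, ← map_zsmul]
  exact ⟨_, rfl⟩
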